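/- arXiv:2503.02740 — 8 statements merged into one kernel-verified Lean document; each statement's English description precedes it below -/
import Mathlib

section
/- Let f be a voting rule on a domain D that satisfies false-name-proofness and participation. Let N be a society, i ∈ N a voter, and P_N ∈ D^N a profile. If i* is a voter with i* ∉ N and P_{i*} ∈ D is a preference with P_{i*} = P_i, then f(P_N) = f(P_{N∪{i*}}), where P_{N∪{i*}} is the profile over N∪{i*} that agrees with P_N on N and gives i* the preference P_{i*}. -/
/-! ## Basic framework: preferences, profiles, voting rules, axioms -/

/-- A preference is a strict linear order on the set `A` of alternatives, encoded as a
`LinearOrder` structure on `A`; alternative `x` is strictly preferred to `y` iff `y < x`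
(i.e. "greater is better"). -/
abbrev Pref (A : Type*) := LinearOrder A

/-- Strict preference: `x` is strictly preferred to `y` under `p`. -/
def Pref.pref {A : Type*} (p : Pref A) (x y : A) : Prop := p.lt y x

/-- Weak preference (the weak counterpart `R` of the strict preference `P`):
`x` is weakly preferred to `y` under `p`. -/
def Pref.wpref {A : Type*} (p : Pref A) (x y : A) : Prop := p.le y x

/-- The top (most preferred) alternative of a preference. -/
noncomputable def Pref.top {A : Type*} [Fintype A] [Nonempty A] (p : Pref A) : A :=
  @Finset.max' A p Finset.univ Finset.univ_nonempty

/-- The bottom (least preferred) alternative of a preference. -/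
noncomputable def Pref.bot {A : Type*} [Fintype A] [Nonempty A] (p : Pref A) : A :=
  @Finset.min' A p Finset.univ Finset.univ_nonempty

/-- A profile over the society `N` (a finite set of voters, indexed by naturals):
it assigns a preference to each member of `N`. -/
abbrev Profile (A : Type*) (N : Finset ℕ) := (i : ℕ) → i ∈ N → Pref A

/-- The profile `P` takes values in the domain `D` of preferences. -/
def Profile.inDomain {A : Type*} {N : Finset ℕ} (P : Profile A N) (D : Set (Pref A)) : Prop :=
  ∀ i (hi : i ∈ N), P i hi ∈ D

/-- A (variable-population) voting rule: it assigns an alternative to every society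
together with a profile over it. -/
abbrev Rule (A : Type*) := (N : Finset ℕ) → Profile A N → A

/-- Ontoness on the domain `D`: for every society and every alternative, some
`D`-profile realizes that alternative. -/
def OntoOn {A : Type*} (D : Set (Pref A)) (f : Rule A) : Prop :=
  ∀ N : Finset ℕ, N.Nonempty → ∀ a : A, ∃ P : Profile A N, P.inDomain D ∧ f N P = a

/-- Tops-onliness on the domain `D`: two `D`-profiles with the same tops get the
same outcome. -/
def TopsOnlyOn {A : Type*} [Fintype A] [Nonempty A] (D : Set (Pref A)) (f : Rule A) : Prop :=
  ∀ N : Finset ℕ, N.Nonempty → ∀ P P' : Profile A N, P.inDomain D → P'.inDomain D →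
    (∀ i (hi : i ∈ N), (P i hi).top = (P' i hi).top) → f N P = f N P'

/-- False-name-proofness on the domain `D`: if a voter `i` of the society `N` casts,
under fresh identities `N'`, extra votes identical to her own preference, the outcome
does not improve for her. -/
def FalseNameProofOn {A : Type*} (D : Set (Pref A)) (f : Rule A) : Prop :=
  ∀ N N' : Finset ℕ, N.Nonempty → N'.Nonempty → Disjoint N N' →
    ∀ P : Profile A (N ∪ N'), P.inDomain D →
      ∀ i (hi : i ∈ N),
        (∀ j (hj : j ∈ N'),
            P j (Finset.mem_union_right N hj) = P i (Finset.mem_union_left N' hi)) →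
        (P i (Finset.mem_union_left N' hi)).wpref
          (f N (fun j hj => P j (Finset.mem_union_left N' hj)))
          (f (N ∪ N') P)

/-- Participation on the domain `D`: no voter gains by abstaining. -/
def ParticipationOn {A : Type*} (D : Set (Pref A)) (f : Rule A) : Prop :=
  ∀ N : Finset ℕ, 2 ≤ N.card → ∀ P : Profile A N, P.inDomain D →
    ∀ i (hi : i ∈ N),
      (P i hi).wpref (f N P) (f (N.erase i) (fun j hj => P j (Finset.mem_of_mem_erase hj)))

lemma mem_of_mem_image_perm {σ : Equiv.Perm ℕ} {N : Finset ℕ} {j : ℕ}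
    (hj : j ∈ N.image σ) : σ.symm j ∈ N := by
  obtain ⟨i, hi, rfl⟩ := Finset.mem_image.mp hj
  simpa using hi

/-- The permuted profile `σ(P_N)` over the society `σ(N)`: voter `σ i` gets the
preference `P i`. -/
def permProfile {A : Type*} (σ : Equiv.Perm ℕ) {N : Finset ℕ} (P : Profile A N) :
    Profile A (N.image σ) :=
  fun j hj => P (σ.symm j) (mem_of_mem_image_perm hj)

/-- Anonymity on the domain `D`: permuting the voters' identities does not change
the outcome. -/
def AnonymousOn {A : Type*} (D : Set (Pref A)) (f : Rule A) : Prop :=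
  ∀ (σ : Equiv.Perm ℕ) (N : Finset ℕ), N.Nonempty → ∀ P : Profile A N, P.inDomain D →
    f (N.image σ) (permProfile σ P) = f N P

/-- Relabeling a preference along a permutation `γ` of the alternatives: in the new
preference, `γ x` is strictly preferred to `γ y` iff `x` was strictly preferred to `y`. -/
noncomputable def Pref.relabel {A : Type*} (p : Pref A) (γ : Equiv.Perm A) : Pref A :=
  @LinearOrder.lift' A A p γ.symm γ.symm.injective

/-- Neutrality on the domain `D`: relabeling the alternatives by a permutation `γ`
relabels the outcome accordingly. -/
def NeutralOn {A : Type*} (D : Set (Pref A)) (f : Rule A) : Prop :=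
  ∀ (γ : Equiv.Perm A) (N : Finset ℕ), N.Nonempty → ∀ P : Profile A N, P.inDomain D →
    γ (f N P) = f N (fun i hi => (P i hi).relabel γ)

/-! Adding a clone `k` of voter `i` cannot help `i` (false-name-proofness with `N' = {k}`),
and the clone, whose preference is `i`'s, cannot lose by joining (participation of `k`).
Both statements concern the same preference, so antisymmetry forces equality. -/

lemma Pref.wpref_antisymm {A : Type*} (p : Pref A) {x y : A} (hxy : p.wpref x y)
    (hyx : p.wpref y x) : x = y :=
  @le_antisymm A p.toPartialOrder _ _ hyx hxy

def Profile.extend {A : Type*} {N : Finset ℕ} (P : Profile A N) (k : ℕ) (p : Pref A) :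
    Profile A (N ∪ {k}) :=
  fun j _ => if h : j ∈ N then P j h else p

namespace Profile

variable {A : Type*} {N : Finset ℕ} (P : Profile A N) (k : ℕ) (p : Pref A)

lemma extend_of_mem {j : ℕ} (hj : j ∈ N) (hj' : j ∈ N ∪ {k}) : P.extend k p j hj' = P j hj :=
  dif_pos hj

lemma extend_self (hk : k ∉ N) (hk' : k ∈ N ∪ {k}) : P.extend k p k hk' = p :=
  dif_neg hk

lemma extend_restrict :
    (fun j (hj : j ∈ N) => P.extend k p j (Finset.mem_union_left _ hj)) = P :=
  funext₂ fun _ hj => P.extend_of_mem k p hj _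

variable {P k p}

lemma inDomain.extend {D : Set (Pref A)} (hP : P.inDomain D) (hp : p ∈ D) :
    (P.extend k p).inDomain D := by
  intro j hj
  by_cases hjN : j ∈ N
  · rw [P.extend_of_mem k p hjN]
    exact hP j hjN
  · rwa [Profile.extend, dif_neg hjN]

end Profile

lemma rule_congr {A : Type*} (f : Rule A) {N₁ N₂ : Finset ℕ} (h : N₁ = N₂)
    (P₁ : Profile A N₁) (P₂ : Profile A N₂)
    (hP : ∀ j (hj : j ∈ N₁), P₁ j hj = P₂ j (h ▸ hj)) : f N₁ P₁ = f N₂ P₂ := by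
  subst h
  exact congrArg (f N₁) (funext₂ hP)

lemma FalseNameProofOn.wpref_extend_clone {A : Type*} {D : Set (Pref A)} {f : Rule A}
    (hfnp : FalseNameProofOn D f) {N : Finset ℕ} {P : Profile A N} (hP : P.inDomain D)
    {i : ℕ} (hi : i ∈ N) {k : ℕ} (hk : k ∉ N) :
    (P i hi).wpref (f N P) (f (N ∪ {k}) (P.extend k (P i hi))) := by
  have key := hfnp N {k} ⟨i, hi⟩ (Finset.singleton_nonempty k)
    (Finset.disjoint_singleton_right.mpr hk) (P.extend k (P i hi)) (hP.extend (hP i hi)) i hi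
    (fun j hj => by
      obtain rfl := Finset.mem_singleton.mp hj
      rw [P.extend_self _ _ hk, P.extend_of_mem _ _ hi])
  rwa [Profile.extend_restrict, P.extend_of_mem _ _ hi] at key

lemma ParticipationOn.wpref_extend {A : Type*} {D : Set (Pref A)} {f : Rule A}
    (hpart : ParticipationOn D f) {N : Finset ℕ} (hN : N.Nonempty) {P : Profile A N}
    (hP : P.inDomain D) {k : ℕ} (hk : k ∉ N) {p : Pref A} (hp : p ∈ D) :
    p.wpref (f (N ∪ {k}) (P.extend k p)) (f N P) := by
  have hcard : 2 ≤ (N ∪ {k}).card := by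
    rw [Finset.card_union_of_disjoint (Finset.disjoint_singleton_right.mpr hk),
      Finset.card_singleton]
    have := hN.card_pos
    omega
  have hk' : k ∈ N ∪ {k} := Finset.mem_union_right _ (Finset.mem_singleton_self k)
  have key := hpart _ hcard _ (hP.extend hp) k hk'
  rw [P.extend_self k p hk] at key
  have herase : (N ∪ {k}).erase k = N := by
    rw [Finset.union_comm, ← Finset.insert_eq, Finset.erase_insert hk]
  rwa [rule_congr f herase _ P fun j hj => P.extend_of_mem k p (herase ▸ hj) _] at key

theorem stmt_0_general {A : Type*} (D : Set (Pref A)) (f : Rule A)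
    (hfnp : FalseNameProofOn D f) (hpart : ParticipationOn D f)
    (N : Finset ℕ) (P : Profile A N) (hP : P.inDomain D)
    (i : ℕ) (hi : i ∈ N) (istar : ℕ) (histar : istar ∉ N)
    (Pstar : Pref A) (hPstar : Pstar = P i hi) :
    f N P = f (N ∪ {istar}) (fun j hj => if h : j ∈ N then P j h else Pstar) := by
  subst hPstar
  exact (P i hi).wpref_antisymm (hfnp.wpref_extend_clone hP hi histar)
    (hpart.wpref_extend ⟨i, hi⟩ hP histar (hP i hi))

/-- If a voting rule on domain `D` satisfies false-name-proofness and
participation, then adding to the society a fresh voter `i*` whose preference equals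
that of an existing voter `i` does not change the outcome. -/
theorem stmt_0 {A : Type*} (D : Set (Pref A)) (f : Rule A)
    (hfnp : FalseNameProofOn D f) (hpart : ParticipationOn D f)
    (N : Finset ℕ) (P : Profile A N) (hP : P.inDomain D)
    (i : ℕ) (hi : i ∈ N) (istar : ℕ) (histar : istar ∉ N)
    (Pstar : Pref A) (hPstarD : Pstar ∈ D) (hPstar : Pstar = P i hi) :
    f N P = f (N ∪ {istar}) (fun j hj => if h : j ∈ N then P j h else Pstar) :=
  stmt_0_general D f hfnp hpart N P hP i hi istar histar Pstar hPstar
end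

section
/- Let f be a voting rule on a domain D that satisfies false-name-proofness and participation. Let N be a society, i ∈ N a voter, and P_N ∈ D^N a profile. If i* is a voter with i* ∉ N and P_{i*} ∈ D is a preference with P_{i*} = P_i, then f(P_{(N∪{i*})\{i}}) = f(P_N), where P_{(N∪{i*})\{i}} is the profile over (N∪{i*})\{i} that agrees with P_N on N\{i} and gives i* the preference P_{i*}. -/
theorem FalseNameProofOn.eq_of_union_clone {A : Type*} {D : Set (Pref A)} {f : Rule A}
    (hfnp : FalseNameProofOn D f) (hpart : ParticipationOn D f)
    {S : Finset ℕ} {j k : ℕ} (hj : j ∈ S) (hk : k ∉ S)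
    {g : ℕ → Pref A} (hgD : ∀ l ∈ S ∪ {k}, g l ∈ D) (hkj : g k = g j) :
    f (S ∪ {k}) (fun l _ => g l) = f S (fun l _ => g l) := by
  have hinsert : S ∪ {k} = insert k S := by rw [Finset.union_comm, ← Finset.insert_eq]
  have hcard : 2 ≤ (S ∪ {k}).card := by
    rw [hinsert, Finset.card_insert_of_notMem hk]
    exact Nat.succ_le_succ (Finset.card_pos.mpr ⟨j, hj⟩)
  have clone_no_gain : (g j).wpref (f S fun l _ => g l) (f (S ∪ {k}) fun l _ => g l) :=
    hfnp S {k} ⟨j, hj⟩ ⟨k, Finset.mem_singleton_self k⟩ (Finset.disjoint_singleton_right.mpr hk)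
      (fun l _ => g l) hgD j hj (fun l hl => by rw [Finset.mem_singleton.mp hl, hkj])
  have clone_no_loss : (g k).wpref (f (S ∪ {k}) fun l _ => g l) (f S fun l _ => g l) := by
    have h := hpart (S ∪ {k}) hcard (fun l _ => g l) hgD k (by simp)
    rw [hinsert] at h ⊢
    rwa [Finset.erase_insert hk] at h
  rw [hkj] at clone_no_loss
  exact (g j).le_antisymm _ _ clone_no_gain clone_no_loss

/-- If a voting rule on domain `D` satisfies false-name-proofness and
participation, then replacing a voter `i` of the society by a fresh voter `i*` with the
same preference does not change the outcome. -/
theorem stmt_1 {A : Type*} (D : Set (Pref A)) (f : Rule A)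
    (hfnp : FalseNameProofOn D f) (hpart : ParticipationOn D f)
    (N : Finset ℕ) (P : Profile A N) (hP : P.inDomain D)
    (i : ℕ) (hi : i ∈ N) (istar : ℕ) (histar : istar ∉ N)
    (Pstar : Pref A) (hPstarD : Pstar ∈ D) (hPstar : Pstar = P i hi) :
    f ((N ∪ {istar}).erase i)
        (fun j hj => if h : j ∈ N then P j h else Pstar) = f N P := by
  set g : ℕ → Pref A := fun j => if h : j ∈ N then P j h else Pstar
  have hgD : ∀ j, g j ∈ D := fun j => by
    by_cases h : j ∈ N
    · simpa [g, h] using hP j h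
    · simpa [g, h] using hPstarD
  have hgi : g i = P i hi := dif_pos hi
  have hgistar : g istar = Pstar := dif_neg histar
  have hclone : g istar = g i := by rw [hgi, hgistar, hPstar]
  have hgN : (fun j (_ : j ∈ N) => g j) = P := funext fun j => funext fun hj => dif_pos hj
  have histar_ne : istar ≠ i := fun h => histar (h ▸ hi)
  set M := (N ∪ {istar}).erase i
  have hM : M ∪ {i} = N ∪ {istar} := by
    rw [Finset.union_comm, ← Finset.insert_eq, Finset.insert_erase (by simp [hi])]
  calc f M (fun j _ => g j)
      = f (M ∪ {i}) (fun j _ => g j) :=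
        (hfnp.eq_of_union_clone hpart (j := istar) (by simp [histar_ne])
          (Finset.notMem_erase i _) (fun j _ => hgD j) hclone.symm).symm
    _ = f (N ∪ {istar}) (fun j _ => g j) := by rw [hM]
    _ = f N P := by
      rw [hfnp.eq_of_union_clone hpart hi histar (fun j _ => hgD j) hclone, hgN]
end

section
/- Every voting rule f on a domain D that satisfies false-name-proofness and participation also satisfies anonymity. -/
/-! Adding a clone `j` of a voter `i` does not change the outcome: by false-name-proofness `i`
does not gain from the extra vote, by participation `j` does not gain by abstaining, and `i` and
`j` have the same preference. Hence a voter may be replaced by a fresh clone of itself and, one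
voter at a time, a whole society may be renamed injectively onto names disjoint from it. An
arbitrary renaming `σ` of `N` factors through a society `τ(N)` disjoint from both `N` and
`σ(N)`. -/

section Cloning

variable {A : Type*} {D : Set (Pref A)} {f : Rule A}

lemma rule_congr_society (f : Rule A) (g : ℕ → Pref A) {N M : Finset ℕ} (h : N = M) :
    f N (fun k _ => g k) = f M (fun k _ => g k) := by
  subst h
  rfl

lemma rule_insert_clone (hfnp : FalseNameProofOn D f) (hpart : ParticipationOn D f)
    (g : ℕ → Pref A) {N : Finset ℕ} {i j : ℕ} (hi : i ∈ N) (hj : j ∉ N) (hgj : g j = g i)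
    (hD : ∀ k ∈ N, g k ∈ D) :
    f (insert j N) (fun k _ => g k) = f N (fun k _ => g k) := by
  have hD' : ∀ k ∈ insert j N, g k ∈ D := by
    intro k hk
    rcases Finset.mem_insert.mp hk with rfl | hk
    · exact hgj ▸ hD i hi
    · exact hD k hk
  have hcard : 2 ≤ (insert j N).card := by
    rw [Finset.card_insert_of_notMem hj]
    exact Nat.succ_le_succ (Finset.card_pos.mpr ⟨i, hi⟩)
  have hunion : N ∪ {j} = insert j N := by ext; simp
  have hle : (g i).wpref (f N fun k _ => g k) (f (N ∪ {j}) fun k _ => g k) :=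
    hfnp N {j} ⟨i, hi⟩ (Finset.singleton_nonempty j) (Finset.disjoint_singleton_right.mpr hj)
      (fun k _ => g k) (fun k hk => hD' k (hunion ▸ hk)) i hi
      (fun k hk => by rw [Finset.mem_singleton.mp hk, hgj])
  have hge : (g j).wpref (f (insert j N) fun k _ => g k)
      (f ((insert j N).erase j) fun k _ => g k) :=
    hpart (insert j N) hcard (fun k _ => g k) hD' j (Finset.mem_insert_self j N)
  rw [rule_congr_society f g hunion] at hle
  rw [rule_congr_society f g (Finset.erase_insert hj), hgj] at hge
  exact (g i).le_antisymm _ _ hle hge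

lemma rule_replace_clone (hfnp : FalseNameProofOn D f) (hpart : ParticipationOn D f)
    (g : ℕ → Pref A) {N : Finset ℕ} {i j : ℕ} (hi : i ∈ N) (hj : j ∉ N) (hgj : g j = g i)
    (hD : ∀ k ∈ N, g k ∈ D) :
    f (insert j (N.erase i)) (fun k _ => g k) = f N (fun k _ => g k) := by
  have hij : i ≠ j := by rintro rfl; exact hj hi
  have hD' : ∀ k ∈ insert j (N.erase i), g k ∈ D := by
    intro k hk
    rcases Finset.mem_insert.mp hk with rfl | hk
    · exact hgj ▸ hD i hi
    · exact hD k (Finset.mem_of_mem_erase hk)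
  have hswap : insert i (insert j (N.erase i)) = insert j N := by
    rw [Finset.insert_comm, Finset.insert_erase hi]
  calc f (insert j (N.erase i)) (fun k _ => g k)
      = f (insert i (insert j (N.erase i))) (fun k _ => g k) :=
        (rule_insert_clone hfnp hpart g (Finset.mem_insert_self j _) (by simp [hij])
          hgj.symm hD').symm
    _ = f (insert j N) (fun k _ => g k) := rule_congr_society f g hswap
    _ = f N (fun k _ => g k) := rule_insert_clone hfnp hpart g hi hj hgj hD

lemma rule_image_eq_of_fresh (hfnp : FalseNameProofOn D f) (hpart : ParticipationOn D f)
    (g : ℕ → Pref A) {N : Finset ℕ} {e : ℕ → ℕ} (he : Set.InjOn e N)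
    (hdisj : Disjoint N (N.image e)) (hge : ∀ n ∈ N, g (e n) = g n)
    (hD : ∀ n ∈ N, g n ∈ D) :
    f (N.image e) (fun k _ => g k) = f N (fun k _ => g k) := by
  suffices h : ∀ S ⊆ N, f (N \ S ∪ S.image e) (fun k _ => g k) = f N (fun k _ => g k) by
    rw [← h N subset_rfl]
    exact rule_congr_society f g (by simp)
  intro S
  induction S using Finset.induction_on with
  | empty => intro _; exact rule_congr_society f g (by simp)
  | @insert a S haS ih =>
    intro hS
    have haN : a ∈ N := hS (Finset.mem_insert_self a S)
    have hSN : S ⊆ N := (Finset.subset_insert a S).trans hS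
    have hfresh : ∀ n ∈ N, e n ∉ N := fun n hn hen =>
      Finset.disjoint_left.mp hdisj hen (Finset.mem_image_of_mem e hn)
    have hea : e a ∉ N \ S ∪ S.image e := by
      simp only [Finset.mem_union, Finset.mem_sdiff, Finset.mem_image, not_or, not_exists,
        not_and]
      exact ⟨fun h => absurd h (hfresh a haN), fun s hs hsa => haS (he (hSN hs) haN hsa ▸ hs)⟩
    have hD' : ∀ k ∈ N \ S ∪ S.image e, g k ∈ D := by
      intro k hk
      rcases Finset.mem_union.mp hk with hk | hk
      · exact hD k (Finset.mem_sdiff.mp hk).1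
      · obtain ⟨s, hs, rfl⟩ := Finset.mem_image.mp hk
        exact hge s (hSN hs) ▸ hD s (hSN hs)
    have hset : insert (e a) ((N \ S ∪ S.image e).erase a) =
        N \ insert a S ∪ (insert a S).image e := by
      ext k
      simp only [Finset.mem_insert, Finset.mem_erase, Finset.mem_union, Finset.mem_sdiff,
        Finset.mem_image]
      grind
    rw [← hset, rule_replace_clone hfnp hpart g (by simp [haN, haS]) hea (hge a haN) hD',
      ih hSN]

lemma rule_image_eq_of_disjoint (hfnp : FalseNameProofOn D f) (hpart : ParticipationOn D f)
    {N M : Finset ℕ} (hN : N.Nonempty) (P : Profile A N) (hP : P.inDomain D) {e : ℕ → ℕ}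
    (he : Set.InjOn e N) (hM : N.image e = M) (hdisj : Disjoint N M) (Q : Profile A M)
    (hQ : ∀ n (hn : n ∈ N) (hen : e n ∈ M), Q (e n) hen = P n hn) :
    f M Q = f N P := by
  classical
  subst hM
  obtain ⟨n₀, hn₀⟩ := hN
  let g : ℕ → Pref A := fun k =>
    if h : k ∈ N then P k h else if h : k ∈ N.image e then Q k h else P n₀ hn₀
  have hgQ : ∀ k (hk : k ∈ N.image e), g k = Q k hk := fun k hk => by
    simp only [g, dif_neg (Finset.disjoint_right.mp hdisj hk), dif_pos hk]
  have hgP : ∀ k (hk : k ∈ N), g k = P k hk := fun k hk => dif_pos hk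
  calc f (N.image e) Q = f (N.image e) fun k _ => g k :=
        congrArg (f _) (funext₂ fun k hk => (hgQ k hk).symm)
    _ = f N fun k _ => g k := by
        refine rule_image_eq_of_fresh hfnp hpart g he hdisj (fun n hn => ?_) fun n hn => ?_
        · rw [hgQ _ (Finset.mem_image_of_mem e hn), hQ n hn, hgP n hn]
        · exact hgP n hn ▸ hP n hn
    _ = f N P := congrArg (f _) (funext₂ hgP)

end Cloning

lemma exists_perm_image_disjoint (N W : Finset ℕ) :
    ∃ τ : Equiv.Perm ℕ, Disjoint (N.image τ) W := by
  obtain ⟨c, hc⟩ := (N ∪ W).exists_nat_subset_range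
  let s : ℕ → ℕ := fun k => if k < c then k + c else if k < 2 * c then k - c else k
  have hs : Function.Involutive s := by
    intro k
    simp only [s]
    split_ifs <;> omega
  refine ⟨hs.toPerm s, Finset.disjoint_left.mpr ?_⟩
  rintro _ hk hkW
  obtain ⟨n, hn, rfl⟩ := Finset.mem_image.mp hk
  have hnc := Finset.mem_range.mp (hc (Finset.mem_union_left W hn))
  have hsc := Finset.mem_range.mp (hc (Finset.mem_union_right N hkW))
  simp only [Function.Involutive.coe_toPerm, s, if_pos hnc] at hsc
  omega

/-- Every voting rule on a domain `D` satisfying false-name-proofness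
and participation is anonymous. -/
theorem stmt_2 {A : Type*} (D : Set (Pref A)) (f : Rule A)
    (hfnp : FalseNameProofOn D f) (hpart : ParticipationOn D f) :
    AnonymousOn D f := by
  intro σ N hN P hP
  obtain ⟨τ, hτ⟩ := exists_perm_image_disjoint N (N ∪ N.image σ)
  obtain ⟨hτN, hτσN⟩ := Finset.disjoint_union_left.mp hτ.symm
  have hτσ : (N.image σ).image (τ * σ⁻¹) = N.image τ := by
    rw [Finset.image_image]
    congr 1
    ext n
    simp
  calc f (N.image σ) (permProfile σ P) = f (N.image τ) (permProfile τ P) :=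
        (rule_image_eq_of_disjoint hfnp hpart (hN.image σ) _ (fun _ _ => hP _ _)
          (τ * σ⁻¹).injective.injOn hτσ hτσN _ fun n hn _ => by simp [permProfile]).symm
    _ = f N P :=
        rule_image_eq_of_disjoint hfnp hpart hN P hP τ.injective.injOn rfl hτN _
          fun n hn _ => by simp [permProfile]
end

section
/- Let A be a finite set of alternatives with |A| ≥ 2. There is no voting rule f on the universal domain 𝒰_A that satisfies both anonymity and neutrality. -/
/-!
Rank the alternatives cyclically: identify them with `Fin n` and let voter `k < n` order them
by `a ↦ a - k`. Shifting every alternative by `1` turns voter `k`'s preference into voter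
`k + 1`'s, so relabelling the profile by this shift only rotates the voters. Anonymity and
neutrality then force the shift to fix the outcome, but the shift has no fixed point once `n ≥ 2`.
-/
open Finset

section Rules

variable {A : Type*}

lemma rule_apply_congr (f : Rule A) {M N : Finset ℕ} (h : M = N) {P : Profile A M}
    {Q : Profile A N} (hPQ : ∀ i (hiM : i ∈ M) (hiN : i ∈ N), P i hiM = Q i hiN) :
    f M P = f N Q := by
  subst h
  congr
  funext i hi
  exact hPQ i hi hi

theorem AnonymousOn.apply_eq_of_neutralOn {D : Set (Pref A)} {f : Rule A}
    (hanon : AnonymousOn D f) (hneut : NeutralOn D f) {N : Finset ℕ} (hN : N.Nonempty)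
    {P : Profile A N} (hPD : P.inDomain D) {σ : Equiv.Perm ℕ} {γ : Equiv.Perm A}
    (hσN : N.image σ = N)
    (hP : ∀ i (hi : i ∈ N) (hi' : σ.symm i ∈ N), P (σ.symm i) hi' = (P i hi).relabel γ) :
    γ (f N P) = f N P := calc
  γ (f N P) = f N (fun i hi => (P i hi).relabel γ) := hneut γ N hN P hPD
  _ = f (N.image σ) (permProfile σ P) :=
    rule_apply_congr f hσN.symm fun i hi _ => (hP i hi _).symm
  _ = f N P := hanon σ N hN P hPD

end Rules

section Cyclic

variable {A : Type*} {n : ℕ} [NeZero n] (e : A ≃ Fin n)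

def cyclicPref (k : Fin n) : Pref A :=
  LinearOrder.lift' (fun a => e a - k) (sub_left_injective.comp e.injective)

def cyclicShift : Equiv.Perm A := e.symm.permCongr (Equiv.addRight 1)

lemma cyclicShift_apply (a : A) : e (cyclicShift e a) = e a + 1 := by
  simp [cyclicShift]

lemma cyclicShift_symm_apply (a : A) : e ((cyclicShift e).symm a) = e a - 1 := by
  rw [eq_sub_iff_add_eq, ← cyclicShift_apply, Equiv.apply_symm_apply]

lemma cyclicPref_relabel_cyclicShift (k : Fin n) :
    (cyclicPref e k).relabel (cyclicShift e) = cyclicPref e (k + 1) := by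
  apply LinearOrder.ext
  intro x y
  change e ((cyclicShift e).symm x) - k ≤ e ((cyclicShift e).symm y) - k ↔
    e x - (k + 1) ≤ e y - (k + 1)
  simp only [cyclicShift_symm_apply, sub_sub, add_comm (1 : Fin n)]

lemma cyclicShift_apply_ne (hn : 2 ≤ n) (a : A) : cyclicShift e a ≠ a := by
  intro h
  have := cyclicShift_apply e a
  rw [h] at this
  have h1 : (1 : Fin n) = 0 := by simpa using this
  rw [Fin.ext_iff, Fin.val_one', Fin.val_zero, Nat.one_mod_eq_zero_iff] at h1
  omega

end Cyclic

section Voters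

variable (n : ℕ) [NeZero n]

def rotateVoters : Equiv.Perm ℕ := (Equiv.addRight (1 : Fin n)).extendDomain Fin.equivSubtype

lemma rotateVoters_apply (k : Fin n) : rotateVoters n k = ↑(k + 1) :=
  Equiv.Perm.extendDomain_apply_image _ Fin.equivSubtype k

lemma image_range_rotateVoters_symm : (range n).image (rotateVoters n).symm = range n := by
  have hsupp : {i | (rotateVoters n).symm i ≠ i} ⊆ range n := by
    intro i hi
    by_contra hin
    have hlt : ¬ i < n := by simpa using hin
    exact hi ((Equiv.symm_apply_eq _).2
      (Equiv.Perm.extendDomain_apply_not_subtype _ Fin.equivSubtype hlt).symm)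
  simpa [map_eq_image] using map_perm hsupp

end Voters

/-- For a finite set of alternatives with at least two elements, no
voting rule on the universal domain is both anonymous and neutral. -/
theorem stmt_3 {A : Type*} [Fintype A] (hA : 2 ≤ Fintype.card A) :
    ¬ ∃ f : Rule A, AnonymousOn Set.univ f ∧ NeutralOn Set.univ f := by
  rintro ⟨f, hanon, hneut⟩
  set n := Fintype.card A
  have : NeZero n := ⟨by omega⟩
  let e := Fintype.equivFin A
  let P : Profile A (range n) := fun i hi => cyclicPref e ⟨i, mem_range.1 hi⟩
  refine cyclicShift_apply_ne e hA _ <| hanon.apply_eq_of_neutralOn hneut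
    (nonempty_range_iff.2 (by omega)) (P := P) (fun _ _ => trivial)
    (σ := (rotateVoters n).symm) (image_range_rotateVoters_symm n) ?_
  intro i hi _
  obtain ⟨k, rfl⟩ : ∃ k : Fin n, (k : ℕ) = i := ⟨⟨i, mem_range.1 hi⟩, rfl⟩
  simp only [P, Equiv.symm_symm, rotateVoters_apply, cyclicPref_relabel_cyclicShift, Fin.eta]
end

section
/- Let A be a finite set of alternatives with |A| ≥ 2. There is no voting rule f on the universal domain 𝒰_A that satisfies false-name-proofness, participation, and neutrality. -/
/-!
Participation and false-name-proofness together make a rule blind to clones: when a voter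
with the same preference as voter `i` joins, the outcome cannot improve for `i`
(false-name-proofness) and cannot worsen for the newcomer (participation), so it does not move.
Hence the outcome depends only on the set of preferences present in the profile. A profile
containing every preference has a set of preferences invariant under relabeling, so by
neutrality its outcome is fixed by every permutation of the alternatives, which is impossible
when there are at least two of them.
-/

section

variable {A : Type*}

def Profile.prefs {N : Finset ℕ} (P : Profile A N) : Set (Pref A) :=
  {p | ∃ i, ∃ hi : i ∈ N, P i hi = p}

def Profile.restrict {N M : Finset ℕ} (P : Profile A M) (h : N ⊆ M) : Profile A N :=
  fun i hi => P i (h hi)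

def Profile.append {N M : Finset ℕ} (P : Profile A N) (Q : Profile A M) : Profile A (N ∪ M) :=
  fun k hk => if h : k ∈ N then P k h else Q k ((Finset.mem_union.mp hk).resolve_left h)

theorem Profile.append_restrict_left {N M : Finset ℕ} (P : Profile A N) (Q : Profile A M) :
    (P.append Q).restrict Finset.subset_union_left = P := by
  funext k hk
  exact dif_pos hk

theorem Profile.append_restrict_right {N M : Finset ℕ} (hNM : Disjoint N M) (P : Profile A N)
    (Q : Profile A M) : (P.append Q).restrict Finset.subset_union_right = Q := by
  funext k hk
  exact dif_neg (Finset.disjoint_right.mp hNM hk)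

theorem Profile.prefs_append_subset {N M : Finset ℕ} (P : Profile A N) (Q : Profile A M) :
    (P.append Q).prefs ⊆ P.prefs ∪ Q.prefs := by
  rintro p ⟨k, hk, rfl⟩
  by_cases h : k ∈ N
  · exact Or.inl ⟨k, h, (dif_pos h).symm⟩
  · exact Or.inr ⟨k, (Finset.mem_union.mp hk).resolve_left h,
      by simp only [Profile.append, dif_neg h]⟩

theorem Profile.exists_disjoint_copy {N : Finset ℕ} (P : Profile A N) (S : Finset ℕ) :
    ∃ (T : Finset ℕ) (Q : Profile A T), Disjoint S T ∧ Q.prefs = P.prefs := by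
  set t := S.sup id + 1
  have mem_shift : ∀ {k}, k ∈ N.map (addRightEmbedding t) → k - t ∈ N := by
    intro k hk
    obtain ⟨a, ha, rfl⟩ := Finset.mem_map.mp hk
    simpa using ha
  refine ⟨N.map (addRightEmbedding t), fun k hk => P (k - t) (mem_shift hk), ?_, ?_⟩
  · refine Finset.disjoint_left.mpr fun k hkS hkT => ?_
    obtain ⟨a, -, rfl⟩ := Finset.mem_map.mp hkT
    have := Finset.le_sup (f := id) hkS
    simp only [id, addRightEmbedding_apply] at this
    omega
  · ext p
    constructor
    · rintro ⟨k, hk, rfl⟩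
      exact ⟨k - t, mem_shift hk, rfl⟩
    · rintro ⟨i, hi, rfl⟩
      refine ⟨i + t, Finset.mem_map_of_mem _ hi, ?_⟩
      simp only [Nat.add_sub_cancel]

theorem Rule.congr_society (f : Rule A) {N₁ N₂ : Finset ℕ} (h : N₁ = N₂)
    (P : Profile A N₁) : f N₁ P = f N₂ (fun i hi => P i (h ▸ hi)) := by
  subst h
  rfl

theorem Rule.eq_erase_of_clone {f : Rule A} (hfnp : FalseNameProofOn Set.univ f)
    (hpart : ParticipationOn Set.univ f) {M : Finset ℕ} (P : Profile A M) {i j : ℕ}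
    (hi : i ∈ M) (hj : j ∈ M) (hij : i ≠ j) (hclone : P j hj = P i hi) :
    f M P = f (M.erase j) (P.restrict (M.erase_subset j)) := by
  have hiE : i ∈ M.erase j := Finset.mem_erase.mpr ⟨hij, hi⟩
  have hM : M = M.erase j ∪ {j} := by simp [hj]
  have no_gain_by_cloning := hfnp (M.erase j) {j} ⟨i, hiE⟩ (Finset.singleton_nonempty j)
    (Finset.disjoint_singleton_right.mpr (M.notMem_erase j)) (fun k hk => P k (hM ▸ hk))
    (fun _ _ => trivial) i hiE fun k hk => by
      obtain rfl := Finset.mem_singleton.mp hk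
      exact hclone
  have no_gain_by_abstaining :=
    hpart M (Finset.one_lt_card.mpr ⟨i, hi, j, hj, hij⟩) P (fun _ _ => trivial) j hj
  rw [← Rule.congr_society f hM] at no_gain_by_cloning
  rw [hclone] at no_gain_by_abstaining
  exact (P i hi).le_antisymm _ _ no_gain_by_cloning no_gain_by_abstaining

theorem Rule.eq_restrict_of_prefs_subset {f : Rule A} (hfnp : FalseNameProofOn Set.univ f)
    (hpart : ParticipationOn Set.univ f) {N M : Finset ℕ}
    (hNM : N ⊆ M) (P : Profile A M) (hprefs : P.prefs ⊆ (P.restrict hNM).prefs) :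
    f M P = f N (P.restrict hNM) := by
  induction M using Finset.strongInduction with
  | H M ih =>
  by_cases hMN : M ⊆ N
  · obtain rfl := hNM.antisymm hMN
    rfl
  obtain ⟨j, hjM, hjN⟩ := Finset.not_subset.mp hMN
  obtain ⟨i, hi, hclone⟩ := hprefs ⟨j, hjM, rfl⟩
  have hNE : N ⊆ M.erase j := fun k hk =>
    Finset.mem_erase.mpr ⟨ne_of_mem_of_not_mem hk hjN, hNM hk⟩
  rw [Rule.eq_erase_of_clone hfnp hpart P (hNM hi) hjM (ne_of_mem_of_not_mem hi hjN)
    hclone.symm]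
  exact ih _ (Finset.erase_ssubset hjM) hNE _ fun p ⟨k, _, hkp⟩ => hprefs ⟨k, _, hkp⟩

theorem Rule.eq_of_prefs_eq_of_disjoint {f : Rule A} (hfnp : FalseNameProofOn Set.univ f)
    (hpart : ParticipationOn Set.univ f) {N M : Finset ℕ}
    (hNM : Disjoint N M) (P : Profile A N) (Q : Profile A M) (h : P.prefs = Q.prefs) :
    f N P = f M Q := by
  have hR := Profile.prefs_append_subset P Q
  have hRP := Rule.eq_restrict_of_prefs_subset hfnp hpart Finset.subset_union_left
    (P.append Q) (by rw [Profile.append_restrict_left, h, Set.union_self] at *; exact hR)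
  have hRQ := Rule.eq_restrict_of_prefs_subset hfnp hpart Finset.subset_union_right
    (P.append Q) (by rw [Profile.append_restrict_right hNM, h, Set.union_self] at *; exact hR)
  rw [Profile.append_restrict_left] at hRP
  rw [Profile.append_restrict_right hNM] at hRQ
  rw [← hRP, hRQ]

/-- Merging is only possible on disjoint societies, so both profiles are compared with a copy
of `P` on fresh voters. -/
theorem Rule.eq_of_prefs_eq {f : Rule A} (hfnp : FalseNameProofOn Set.univ f)
    (hpart : ParticipationOn Set.univ f) {N M : Finset ℕ}
    (P : Profile A N) (Q : Profile A M) (h : P.prefs = Q.prefs) :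
    f N P = f M Q := by
  obtain ⟨T, R, hdisj, hR⟩ := Profile.exists_disjoint_copy P (N ∪ M)
  rw [Finset.disjoint_union_left] at hdisj
  calc f N P = f T R := Rule.eq_of_prefs_eq_of_disjoint hfnp hpart hdisj.1 P R hR.symm
    _ = f M Q := (Rule.eq_of_prefs_eq_of_disjoint hfnp hpart hdisj.2 Q R (hR.trans h).symm).symm

theorem Pref.relabel_relabel (p : Pref A) (γ δ : Equiv.Perm A) :
    (p.relabel δ).relabel γ = p.relabel (γ * δ) :=
  LinearOrder.ext fun _ _ => Iff.rfl

theorem Pref.relabel_one (p : Pref A) : p.relabel 1 = p :=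
  LinearOrder.ext fun _ _ => Iff.rfl

theorem Pref.relabel_surjective (γ : Equiv.Perm A) :
    Function.Surjective fun p : Pref A => p.relabel γ := fun p =>
  ⟨p.relabel γ⁻¹, by simp only [Pref.relabel_relabel, mul_inv_cancel, Pref.relabel_one]⟩

theorem Profile.prefs_relabel {N : Finset ℕ} (P : Profile A N) (γ : Equiv.Perm A) :
    Profile.prefs (fun i hi => (P i hi).relabel γ) = (fun p => p.relabel γ) '' P.prefs := by
  ext p
  constructor
  · rintro ⟨i, hi, rfl⟩
    exact ⟨P i hi, ⟨i, hi, rfl⟩, rfl⟩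
  · rintro ⟨_, ⟨i, hi, rfl⟩, rfl⟩
    exact ⟨i, hi, rfl⟩

instance Pref.instFinite [Finite A] : Finite (Pref A) :=
  Finite.of_injective (fun p : Pref A => p.le) fun _ _ h =>
    LinearOrder.ext fun x y => iff_of_eq (congrFun (congrFun h x) y)

theorem Profile.exists_prefs_eq_univ [Finite A] :
    ∃ (N : Finset ℕ) (P : Profile A N), N.Nonempty ∧ P.prefs = Set.univ := by
  obtain ⟨n, ⟨e⟩⟩ := Finite.exists_equiv_fin (Pref A)
  have hn : 0 < n := (e (IsWellOrder.linearOrder WellOrderingRel)).pos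
  refine ⟨Finset.range n, fun i hi => e.symm ⟨i, Finset.mem_range.mp hi⟩,
    Finset.nonempty_range_iff.mpr hn.ne', Set.eq_univ_of_forall fun p => ?_⟩
  exact ⟨e p, Finset.mem_range.mpr (e p).isLt, by simp⟩

end

/-- For a finite set of alternatives with at least two elements, no
voting rule on the universal domain satisfies false-name-proofness, participation and
neutrality. -/
theorem stmt_4 {A : Type*} [Fintype A] (hA : 2 ≤ Fintype.card A) :
    ¬ ∃ f : Rule A,
        FalseNameProofOn Set.univ f ∧ ParticipationOn Set.univ f ∧ NeutralOn Set.univ f := by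
  classical
  rintro ⟨f, hfnp, hpart, hneut⟩
  obtain ⟨N, P, hN, hP⟩ := Profile.exists_prefs_eq_univ (A := A)
  have hfix : ∀ γ : Equiv.Perm A, γ (f N P) = f N P := fun γ => by
    rw [hneut γ N hN P fun _ _ => trivial]
    refine Rule.eq_of_prefs_eq hfnp hpart _ _ ?_
    rw [Profile.prefs_relabel, hP, Set.image_univ_of_surjective (Pref.relabel_surjective γ)]
  obtain ⟨y, hy⟩ := Fintype.exists_ne_of_one_lt_card hA (f N P)
  exact hy (by simpa using hfix (Equiv.swap (f N P) y))
end

section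
/- There is no voting rule f on the universal domain 𝒰_𝒪 over subsets of objects that satisfies ontoness, tops-onliness, false-name-proofness, participation, and object neutrality. -/
/-! ## The domain of preferences over subsets of a set `O` of objects -/

/-- Object neutrality: permuting the objects by `μ` (which permutes every subset of
objects pointwise) relabels the outcome accordingly. -/
def ObjectNeutralOn {O : Type*} [Fintype O] [DecidableEq O]
    (D : Set (Pref (Finset O))) (f : Rule (Finset O)) : Prop :=
  ∀ (μ : Equiv.Perm O) (N : Finset ℕ), N.Nonempty →
    ∀ P : Profile (Finset O) N, P.inDomain D →
      (f N P).image μ = f N (fun i hi => (P i hi).relabel μ.finsetCongr)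

/-- A preference over subsets of objects is separable if adding an object `x ∉ S` to a
set `S` improves the set exactly when `{x}` is preferred to `∅`. -/
def Separable {O : Type*} [Fintype O] [DecidableEq O] (p : Pref (Finset O)) : Prop :=
  ∀ (S : Finset O) (x : O), x ∉ S → (p.pref (insert x S) S ↔ p.pref {x} (∅ : Finset O))

/-- The domain of separable preferences over subsets of objects. -/
def SepDom (O : Type*) [Fintype O] [DecidableEq O] : Set (Pref (Finset O)) :=
  {p | Separable p}

/-- `t(P_N)`: the set of distinct top sets of the profile `P`. -/
noncomputable def distinctTops {O : Type*} [Fintype O] [DecidableEq O] {N : Finset ℕ}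
    (P : Profile (Finset O) N) : Finset (Finset O) :=
  N.attach.image fun i => (P i.1 i.2).top

/-- The rule `f^>`: an object is chosen iff it belongs to strictly more than half of the
distinct top sets of the profile. -/
noncomputable def fGt (O : Type*) [Fintype O] [DecidableEq O] : Rule (Finset O) :=
  fun N P =>
    Finset.univ.filter fun x =>
      (distinctTops P).card < 2 * ((distinctTops P).filter fun T => x ∈ T).card

/-- The rule `f^≥`: an object is chosen iff it belongs to at least half of the
distinct top sets of the profile. -/
noncomputable def fGe (O : Type*) [Fintype O] [DecidableEq O] : Rule (Finset O) :=
  fun N P =>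
    Finset.univ.filter fun x =>
      (distinctTops P).card ≤ 2 * ((distinctTops P).filter fun T => x ∈ T).card

/-- `g` is the tops-only extension to the domain `Dbig` (⊇ separable preferences) of the
tops-only rule `f` defined on the separable domain: on every `Dbig`-profile `P`, `g`
agrees with the value of `f` at any separable profile `Q` having the same tops as `P`. -/
def IsTopsOnlyExtensionOn {O : Type*} [Fintype O] [DecidableEq O]
    (Dbig : Set (Pref (Finset O))) (f g : Rule (Finset O)) : Prop :=
  ∀ N : Finset ℕ, N.Nonempty →
    ∀ P : Profile (Finset O) N, P.inDomain Dbig →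
      ∀ Q : Profile (Finset O) N, Q.inDomain (SepDom O) →
        (∀ i (hi : i ∈ N), (P i hi).top = (Q i hi).top) → g N P = f N Q

/-!
A tops-only rule is a function of the reported tops. When a voter adds a clone of herself,
false-name-proofness and participation (for the clone) say that she weakly prefers the old outcome
to the new one and the new one to the old, for every preference with her top; as such preferences
are otherwise arbitrary, cloning never changes the outcome. Replacing voters by clones through a
third voter shows that a two-voter outcome is symmetric in the two tops. Ontoness makes the
one-voter rule injective, so participation forces the outcome at tops `{a}`, `{b}` to be one of
them; swapping `a` and `b` (object neutrality) then moves it to the other, against symmetry.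
-/

namespace Pref

variable {A : Type*} [Fintype A]

section Top

variable [Nonempty A]

lemma le_top (p : Pref A) (x : A) : p.le x p.top :=
  @Finset.le_max' A p _ x (Finset.mem_univ x)

lemma top_eq_of_forall_le (p : Pref A) {T : A} (h : ∀ x, p.le x T) : p.top = T :=
  @le_antisymm A (@LinearOrder.toPartialOrder A p) _ _
    (@Finset.max'_le A p _ _ T fun y _ => h y) (p.le_top T)

lemma relabel_top (p : Pref A) (γ : Equiv.Perm A) : (p.relabel γ).top = γ p.top :=
  top_eq_of_forall_le _ fun x => by
    change p.le (γ.symm x) (γ.symm (γ p.top))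
    rw [Equiv.symm_apply_apply]
    exact p.le_top _

end Top

variable [DecidableEq A]

noncomputable def topThenKey (T v x : A) : Bool ×ₗ Bool ×ₗ Fin (Fintype.card A) :=
  toLex (decide (x = T), toLex (decide (x = v), Fintype.equivFin A x))

@[reducible] noncomputable def topThen (T v : A) : Pref A :=
  LinearOrder.lift' (topThenKey T v) fun _ _ h =>
    (Fintype.equivFin A).injective (congrArg (fun k => (ofLex (ofLex k).2).2) h)

lemma topThen_pref {T v x : A} (hT : x ≠ T) (hv : x ≠ v) : (topThen T v).pref v x := by
  change topThenKey T v x < topThenKey T v v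
  by_cases hvT : v = T <;> simp [topThenKey, hT, hv, hvT, Prod.Lex.toLex_lt_toLex]

variable [Nonempty A]

lemma topThen_top (T v : A) : (topThen T v).top = T :=
  top_eq_of_forall_le _ fun x => by
    change topThenKey T v x ≤ topThenKey T v T
    by_cases hx : x = T
    · rw [hx]
    · simp [topThenKey, hx, Prod.Lex.toLex_le_toLex]

lemma eq_or_eq_top_of_forall_wpref {T u v : A} (h : ∀ p : Pref A, p.top = T → p.wpref u v) :
    u = v ∨ u = T := by
  by_contra! huv
  let _ : LinearOrder A := topThen T v
  exact not_le_of_gt (topThen_pref huv.2 huv.1) (h _ (topThen_top T v))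

end Pref

section TopsOnly

variable {A : Type*} [Fintype A] [DecidableEq A] {f : Rule A} {N : Finset ℕ}
  {t : ℕ → A}

noncomputable def topsValue (f : Rule A) (N : Finset ℕ) (t : ℕ → A) : A :=
  f N fun i _ => Pref.topThen (t i) (t i)

lemma topsValue_congr {t' : ℕ → A} (h : ∀ i ∈ N, t i = t' i) :
    topsValue f N t = topsValue f N t' := by
  unfold topsValue
  congr 1
  funext i hi
  rw [h i hi]

variable [Nonempty A]

lemma TopsOnlyOn.apply_eq_topsValue (htop : TopsOnlyOn Set.univ f) (hN : N.Nonempty)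
    (P : Profile A N) (hP : ∀ i (hi : i ∈ N), (P i hi).top = t i) :
    f N P = topsValue f N t :=
  htop N hN P _ (fun _ _ => trivial) (fun _ _ => trivial) fun i hi => by
    rw [hP, Pref.topThen_top]

/-- Lets a voter and her clones (the voters with top `p.top`) report the arbitrary preference `p`
while every top stays as in `t`. -/
@[reducible] noncomputable def Pref.override (p : Pref A) (t : ℕ → A) (i : ℕ) : Pref A :=
  if t i = p.top then p else Pref.topThen (t i) (t i)

lemma Pref.override_top (p : Pref A) (t : ℕ → A) (i : ℕ) : (p.override t i).top = t i := by
  unfold override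
  split_ifs with h
  · exact h.symm
  · exact Pref.topThen_top _ _

lemma ParticipationOn.topsValue_eq_or_eq (hpart : ParticipationOn Set.univ f)
    (htop : TopsOnlyOn Set.univ f) (hN : 2 ≤ N.card) {i : ℕ} (hi : i ∈ N) :
    topsValue f N t = topsValue f (N.erase i) t ∨ topsValue f N t = t i := by
  have hN' : (N.erase i).Nonempty := by
    rw [← Finset.card_pos, Finset.card_erase_of_mem hi]
    omega
  refine Pref.eq_or_eq_top_of_forall_wpref fun p hp => ?_
  have h := hpart N hN (fun j _ => p.override t j) (fun _ _ => trivial) i hi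
  rwa [htop.apply_eq_topsValue ⟨i, hi⟩ _ fun j _ => p.override_top t j,
    htop.apply_eq_topsValue hN' _ fun j _ => p.override_top t j, Pref.override, if_pos hp.symm] at h

lemma FalseNameProofOn.topsValue_eq_or_eq (hfnp : FalseNameProofOn Set.univ f)
    (htop : TopsOnlyOn Set.univ f) {i j : ℕ} (hi : i ∈ N) (hj : j ∉ N) (hji : t j = t i) :
    topsValue f N t = topsValue f (insert j N) t ∨ topsValue f N t = t i := by
  refine Pref.eq_or_eq_top_of_forall_wpref fun p hp => ?_
  have h := hfnp N {j} ⟨i, hi⟩ (Finset.singleton_nonempty j)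
    (Finset.disjoint_singleton_right.mpr hj)
    (fun k _ => p.override t k) (fun _ _ => trivial) i hi fun k hk => by
      rw [Finset.mem_singleton.mp hk]
      simp only [Pref.override, hji]
  rwa [htop.apply_eq_topsValue ⟨i, hi⟩ _ fun k _ => p.override_top t k,
    htop.apply_eq_topsValue ⟨i, Finset.mem_union_left _ hi⟩ _ fun k _ => p.override_top t k,
    Finset.union_singleton, Pref.override, if_pos hp.symm] at h

lemma OntoOn.topsValue_singleton_injective (honto : OntoOn Set.univ f)
    (htop : TopsOnlyOn Set.univ f) (i : ℕ) :
    Function.Injective fun T : A => topsValue f {i} fun _ => T := by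
  refine Finite.injective_iff_surjective.mpr fun a => ?_
  obtain ⟨P, -, hPa⟩ := honto {i} (Finset.singleton_nonempty i) a
  refine ⟨(P i (Finset.mem_singleton_self i)).top, ?_⟩
  rw [← hPa, htop.apply_eq_topsValue (Finset.singleton_nonempty i) P]
  intro j hj
  cases Finset.mem_singleton.mp hj
  rfl

end TopsOnly

section Clones

variable {A : Type*} [Fintype A] [DecidableEq A] [Nonempty A] {f : Rule A}
  (htop : TopsOnlyOn Set.univ f) (hfnp : FalseNameProofOn Set.univ f)
  (hpart : ParticipationOn Set.univ f)
include htop hfnp hpart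

/-- Neither cloning oneself (false-name-proofness) nor the clone's abstention (participation)
may help the voter, so the outcome cannot change. -/
lemma topsValue_insert_of_clone {N : Finset ℕ} {t : ℕ → A} {i j : ℕ} (hi : i ∈ N)
    (hj : j ∉ N) (hji : t j = t i) : topsValue f (insert j N) t = topsValue f N t := by
  have hcard : 2 ≤ (insert j N).card := by
    rw [Finset.card_insert_of_notMem hj]
    have := Finset.card_pos.mpr ⟨i, hi⟩
    omega
  have hpart' := hpart.topsValue_eq_or_eq (t := t) htop hcard (Finset.mem_insert_self j N)
  rw [Finset.erase_insert hj, hji] at hpart'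
  rcases hfnp.topsValue_eq_or_eq htop hi hj hji with h | h
  · exact h.symm
  · rcases hpart' with h' | h'
    · exact h'
    · exact h'.trans h.symm

lemma topsValue_insert_swap {N : Finset ℕ} {t : ℕ → A} {j k : ℕ} (hj : j ∉ N) (hk : k ∉ N)
    (hjk : t j = t k) : topsValue f (insert j N) t = topsValue f (insert k N) t := by
  obtain rfl | hkj := eq_or_ne k j
  · rfl
  have hk' : k ∉ insert j N := by simp [hkj, hk]
  have hj' : j ∉ insert k N := by simp [hkj.symm, hj]
  calc topsValue f (insert j N) t
      = topsValue f (insert k (insert j N)) t :=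
        (topsValue_insert_of_clone htop hfnp hpart (Finset.mem_insert_self j N) hk' hjk.symm).symm
    _ = topsValue f (insert j (insert k N)) t := by rw [Finset.insert_comm]
    _ = topsValue f (insert k N) t :=
        topsValue_insert_of_clone htop hfnp hpart (Finset.mem_insert_self k N) hj' hjk

lemma topsValue_insert_eq_insert {N : Finset ℕ} {t t' : ℕ → A} {j k : ℕ} (hj : j ∉ N)
    (hk : k ∉ N) (ht : ∀ m ∈ N, t m = t' m) (hjk : t j = t' k) :
    topsValue f (insert j N) t = topsValue f (insert k N) t' := by
  obtain rfl | hkj := eq_or_ne k j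
  · exact topsValue_congr fun m hm => by
      rcases Finset.mem_insert.mp hm with rfl | hm
      exacts [hjk, ht m hm]
  set u := Function.update t k (t j)
  calc topsValue f (insert j N) t
      = topsValue f (insert j N) u := topsValue_congr fun m hm =>
        (Function.update_of_ne (by rintro rfl; simp [hkj, hk] at hm) _ _).symm
    _ = topsValue f (insert k N) u :=
        topsValue_insert_swap htop hfnp hpart hj hk (by simp [u, hkj.symm])
    _ = topsValue f (insert k N) t' := topsValue_congr fun m hm => by
        rcases Finset.mem_insert.mp hm with rfl | hmN
        · simp [u, hjk]
        · exact (Function.update_of_ne (by rintro rfl; exact hk hmN) _ _).trans (ht m hmN)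

/-- With a third voter `k` available, each voter of the pair can in turn be replaced by a clone,
which walks the two tops around the triangle `i, j, k`. -/
lemma topsValue_pair_comm {t t' : ℕ → A} {i j : ℕ} (hij : i ≠ j) (hi : t' i = t j)
    (hj : t' j = t i) : topsValue f {i, j} t' = topsValue f {i, j} t := by
  obtain ⟨k, hk⟩ := Infinite.exists_notMem_finset ({i, j} : Finset ℕ)
  obtain ⟨hki, hkj⟩ : k ≠ i ∧ k ≠ j := by simpa using hk
  set u : ℕ → A := fun m => if m = k then t j else t i
  symm
  calc topsValue f {i, j} t
      = topsValue f (insert j {i}) t := by rw [Finset.pair_comm]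
    _ = topsValue f (insert k {i}) u :=
        topsValue_insert_eq_insert htop hfnp hpart (by simpa using hij.symm)
          (by simpa using hki) (by simp [u, hki.symm]) (by simp [u])
    _ = topsValue f (insert i {k}) u := by rw [Finset.pair_comm]
    _ = topsValue f (insert j {k}) u :=
        topsValue_insert_eq_insert htop hfnp hpart (by simpa using hki.symm)
          (by simpa using hkj.symm) (by simp) (by simp [u, hki.symm, hkj.symm])
    _ = topsValue f (insert k {j}) u := by rw [Finset.pair_comm]
    _ = topsValue f {i, j} t' :=
        topsValue_insert_eq_insert htop hfnp hpart (by simpa using hkj)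
          (by simpa using hij) (by simp [u, hkj.symm, hj]) (by simp [u, hi])

lemma topsValue_singleton {t t' : ℕ → A} {i j : ℕ} (h : t i = t' j) :
    topsValue f {i} t = topsValue f {j} t' := by
  simpa using topsValue_insert_eq_insert htop hfnp hpart (Finset.notMem_empty i)
    (Finset.notMem_empty j) (by simp) h

lemma topsValue_pair_eq_or_eq (honto : OntoOn Set.univ f) {t : ℕ → A} {i j : ℕ} (hij : i ≠ j)
    (hne : t i ≠ t j) : topsValue f {i, j} t = t i ∨ topsValue f {i, j} t = t j := by
  have hcard : 2 ≤ ({i, j} : Finset ℕ).card := (Finset.card_pair hij).ge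
  have hi := hpart.topsValue_eq_or_eq (t := t) htop hcard (Finset.mem_insert_self i {j})
  have hj := hpart.topsValue_eq_or_eq (t := t) htop hcard
    (Finset.mem_insert_of_mem (Finset.mem_singleton_self j))
  rw [show ({i, j} : Finset ℕ).erase i = {j} by aesop] at hi
  rw [show ({i, j} : Finset ℕ).erase j = {i} by aesop] at hj
  rcases hi with hi | hi <;> rcases hj with hj | hj
  · refine absurd (honto.topsValue_singleton_injective htop i ?_) hne
    calc topsValue f {i} (fun _ => t i)
        = topsValue f {i} t := topsValue_singleton htop hfnp hpart rfl
      _ = topsValue f {j} t := hj.symm.trans hi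
      _ = topsValue f {i} (fun _ => t j) := topsValue_singleton htop hfnp hpart rfl
  all_goals tauto

end Clones

lemma ObjectNeutralOn.topsValue_image {O : Type*} [Fintype O] [DecidableEq O]
    {f : Rule (Finset O)} (hneut : ObjectNeutralOn Set.univ f) (htop : TopsOnlyOn Set.univ f)
    {N : Finset ℕ} (hN : N.Nonempty) (μ : Equiv.Perm O) (t : ℕ → Finset O) :
    topsValue f N (fun i => (t i).image μ) = (topsValue f N t).image μ := by
  refine (htop.apply_eq_topsValue hN _ fun i _ => ?_).symm.trans
    (hneut μ N hN _ fun _ _ => trivial).symm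
  rw [Pref.relabel_top, Pref.topThen_top, Equiv.finsetCongr_apply, Finset.map_eq_image]
  rfl

/-- On the universal domain of preferences over subsets of a set of at
least two objects, no voting rule satisfies ontoness, tops-onliness,
false-name-proofness, participation and object neutrality. -/
theorem stmt_5 {O : Type*} [Fintype O] [DecidableEq O] (hO : 2 ≤ Fintype.card O) :
    ¬ ∃ f : Rule (Finset O),
        OntoOn Set.univ f ∧ TopsOnlyOn Set.univ f ∧ FalseNameProofOn Set.univ f ∧
        ParticipationOn Set.univ f ∧ ObjectNeutralOn Set.univ f := by
  rintro ⟨f, honto, htop, hfnp, hpart, hneut⟩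
  obtain ⟨a, b, hab⟩ := Fintype.exists_pair_of_one_lt_card hO
  set t : ℕ → Finset O := fun k => if k = 1 then {a} else {b}
  have hswap := hneut.topsValue_image htop (N := {1, 2}) (by simp) (Equiv.swap a b) t
  rw [topsValue_pair_comm htop hfnp hpart (t := t) (by decide) (by simp [t]) (by simp [t])] at hswap
  rcases topsValue_pair_eq_or_eq htop hfnp hpart honto (i := 1) (j := 2) (t := t) (by decide)
    (by simp [t, hab]) with h | h <;>
  · rw [h] at hswap
    simp [t, hab, hab.symm] at hswap
end

section
/- The rule f^≥ defined on the domain 𝒮 of separable preferences by: x ∈ f^≥(P_N) iff |{T ∈ t(P_N) : x ∈ T}| ≥ |t(P_N)|/2, where t(P_N) = {t(P_i) : i ∈ N} is the set of distinct top sets of the profile, satisfies ontoness, tops-onliness, false-name-proofness, participation, and object neutrality. -/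
/-! `f^≥` sees a profile only through its family of distinct tops, and a copy of a voter
adds no new top; this gives tops-onliness and false-name-proofness, and object
neutrality is the equivariance of the weak-majority count. When a voter with top `t`
joins, `t` is added to the family: objects of `t` can only enter the outcome and objects
outside `t` can only leave it. Under a separable preference with top `t`, adding objects
of `t` one at a time and then removing objects outside `t` one at a time never hurts,
which gives participation. For ontoness, a unanimous profile whose common separable
preference has top `a` selects `a`; such a preference compares sets by the colex order of
the sets of objects on which they agree with `a`, since colex refines inclusion. -/

open Finset

section Top

variable {A : Type*} [Fintype A] [Nonempty A] (p : Pref A)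

lemma Pref.le_top_s7 (b : A) : p.le b p.top :=
  @Finset.le_max' A p _ b (mem_univ b)

lemma Pref.top_pref_of_ne {b : A} (hb : b ≠ p.top) : p.pref p.top b :=
  @lt_of_le_of_ne A p.toPartialOrder _ _ (p.le_top_s7 b) hb

lemma Pref.not_pref_top (b : A) : ¬ p.pref b p.top :=
  fun h => ((p.lt_iff_le_not_ge _ _).1 h).2 (p.le_top_s7 b)

lemma Pref.top_eq_of_forall_le_s7 {a : A} (h : ∀ b, p.le b a) : p.top = a :=
  p.le_antisymm _ _ (h p.top) (p.le_top_s7 a)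

lemma Pref.relabel_top_s7 (γ : Equiv.Perm A) : (p.relabel γ).top = γ p.top :=
  (p.relabel γ).top_eq_of_forall_le_s7 fun b => show p.le _ _ by
    simpa using p.le_top_s7 (γ.symm b)

end Top

section Separable

variable {O : Type*} [Fintype O] [DecidableEq O] {p : Pref (Finset O)}

lemma Separable.mem_top_iff (hp : Separable p) {x : O} : x ∈ p.top ↔ p.pref {x} ∅ := by
  constructor
  · intro hx
    rw [← hp _ x (notMem_erase x _), insert_erase hx]
    exact p.top_pref_of_ne fun h => (erase_eq_self.mp h) hx
  · intro hx
    by_contra hxt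
    exact p.not_pref_top _ ((hp _ x hxt).2 hx)

lemma Separable.pref_insert_iff (hp : Separable p) {S : Finset O} {x : O} (hx : x ∉ S) :
    p.pref (insert x S) S ↔ x ∈ p.top := by
  rw [hp S x hx, hp.mem_top_iff]

lemma Separable.le_union (hp : Separable p) {s : Finset O} (hs : s ⊆ p.top) (b : Finset O) :
    p.le b (b ∪ s) := by
  induction s using Finset.induction_on with
  | empty => exact (union_empty b).symm ▸ p.le_refl b
  | insert x s _ ih =>
    rw [union_insert]
    refine p.le_trans _ _ _ (ih ((subset_insert x s).trans hs)) ?_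
    by_cases hxb : x ∈ b ∪ s
    · exact (insert_eq_of_mem hxb).symm ▸ p.le_refl _
    · have hx : p.pref (insert x (b ∪ s)) (b ∪ s) :=
        (hp.pref_insert_iff hxb).2 (hs (mem_insert_self x s))
      exact ((p.lt_iff_le_not_ge _ _).1 hx).1

lemma Separable.le_sdiff (hp : Separable p) {s : Finset O} (hs : Disjoint s p.top)
    (b : Finset O) : p.le b (b \ s) := by
  induction s using Finset.induction_on with
  | empty => exact (sdiff_empty (s := b)).symm ▸ p.le_refl b
  | insert x s _ ih =>
    rw [sdiff_insert]
    refine p.le_trans _ _ _ (ih (disjoint_of_subset_left (subset_insert x s) hs)) ?_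
    by_cases hxb : x ∈ b \ s
    · have hxt : x ∉ p.top := disjoint_left.1 hs (mem_insert_self x s)
      have := hp.pref_insert_iff (notMem_erase x (b \ s))
      rw [insert_erase hxb] at this
      exact (@not_lt _ p _ _).1 (mt this.1 hxt)
    · exact (erase_eq_of_notMem hxb).symm ▸ p.le_refl _

lemma Separable.le_of_subset_of_subset (hp : Separable p) {a b : Finset O}
    (h₁ : b ∩ p.top ⊆ a) (h₂ : a \ p.top ⊆ b) : p.le b a := by
  have hdisj : Disjoint (b \ a) p.top :=
    disjoint_left.2 fun x hx hxt =>
      (mem_sdiff.1 hx).2 (h₁ (mem_inter.2 ⟨(mem_sdiff.1 hx).1, hxt⟩))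
  have ha : (b ∪ a ∩ p.top) \ (b \ a) = a := by
    ext x
    have := @h₂ x
    simp only [mem_sdiff, mem_union, mem_inter] at this ⊢
    tauto
  exact ha ▸ p.le_trans _ _ _ (hp.le_union inter_subset_right b) (hp.le_sdiff hdisj _)

end Separable

section SeparablePref

variable {O : Type*} [Fintype O] [DecidableEq O]

def agreeSet (a T : Finset O) : Finset O := univ.filter fun x => (x ∈ T ↔ x ∈ a)

lemma mem_agreeSet {a T : Finset O} {x : O} : x ∈ agreeSet a T ↔ (x ∈ T ↔ x ∈ a) := by
  simp [agreeSet]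

lemma agreeSet_injective (a : Finset O) : Function.Injective (agreeSet a) := by
  intro S T h
  ext x
  have := congrArg (x ∈ ·) h
  simp only [mem_agreeSet, eq_iff_iff] at this
  tauto

lemma agreeSet_insert_of_mem {a S : Finset O} {x : O} (hxa : x ∈ a) :
    agreeSet a (insert x S) = insert x (agreeSet a S) := by
  ext y
  by_cases hyx : y = x <;> simp [mem_agreeSet, hyx, hxa]

lemma agreeSet_insert_of_notMem {a S : Finset O} {x : O} (hxa : x ∉ a) :
    agreeSet a (insert x S) = (agreeSet a S).erase x := by
  ext y
  by_cases hyx : y = x <;> simp [mem_agreeSet, hyx, hxa]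

noncomputable def separablePref (a : Finset O) : Pref (Finset O) :=
  LinearOrder.lift' (fun T => toColex ((agreeSet a T).map (Fintype.equivFin O).toEmbedding))
    (toColex.injective.comp ((map_injective _).comp (agreeSet_injective a)))

lemma separablePref_pref_of_ssubset {a S T : Finset O} (h : agreeSet a S ⊂ agreeSet a T) :
    (separablePref a).pref T S :=
  Colex.toColex_lt_toColex_of_ssubset (map_ssubset_map.2 h)

lemma separablePref_le_of_subset {a S T : Finset O} (h : agreeSet a S ⊆ agreeSet a T) :
    (separablePref a).le S T :=
  Colex.toColex_le_toColex_of_subset (map_subset_map.2 h)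

lemma separablePref_pref_insert_iff {a S : Finset O} {x : O} (hx : x ∉ S) :
    (separablePref a).pref (insert x S) S ↔ x ∈ a := by
  have hx' : x ∈ agreeSet a S ↔ x ∉ a := by simp [mem_agreeSet, hx]
  by_cases hxa : x ∈ a
  · refine iff_of_true (separablePref_pref_of_ssubset ?_) hxa
    rw [agreeSet_insert_of_mem hxa]
    exact ssubset_insert (by simpa [hx'] using hxa)
  · refine iff_of_false (fun h => ((separablePref a).lt_iff_le_not_ge _ _).1 h |>.2 ?_) hxa
    refine separablePref_le_of_subset ?_
    rw [agreeSet_insert_of_notMem hxa]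
    exact erase_subset x _

lemma separablePref_separable (a : Finset O) : Separable (separablePref a) := fun S x hx => by
  rw [separablePref_pref_insert_iff hx, ← insert_empty_eq,
    separablePref_pref_insert_iff (notMem_empty x)]

lemma separablePref_top (a : Finset O) : (separablePref a).top = a :=
  Pref.top_eq_of_forall_le_s7 _ fun _ => separablePref_le_of_subset fun x _ => by
    simp [mem_agreeSet]

end SeparablePref

section WeakMajority

variable {O : Type*} [Fintype O] [DecidableEq O]

noncomputable def weakMajority (D : Finset (Finset O)) : Finset O :=
  univ.filter fun x => D.card ≤ 2 * (D.filter fun T => x ∈ T).card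

lemma mem_weakMajority {D : Finset (Finset O)} {x : O} :
    x ∈ weakMajority D ↔ D.card ≤ 2 * (D.filter fun T => x ∈ T).card := by
  simp [weakMajority]

lemma weakMajority_singleton (a : Finset O) : weakMajority {a} = a := by
  ext x
  by_cases hx : x ∈ a <;> simp [mem_weakMajority, filter_singleton, hx]

lemma weakMajority_image_equiv {O' : Type*} [Fintype O'] [DecidableEq O'] (e : O ≃ O')
    (D : Finset (Finset O)) :
    weakMajority (D.image (·.image e)) = (weakMajority D).image e := by
  have hinj : Function.Injective fun T : Finset O => T.image e := image_injective e.injective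
  ext y
  have hy (T : Finset O) : y ∈ T.image e ↔ e.symm y ∈ T := by simp [← e.eq_symm_apply]
  rw [hy, mem_weakMajority, mem_weakMajority, filter_image, card_image_of_injective _ hinj,
    card_image_of_injective _ hinj]
  simp only [hy]

lemma weakMajority_inter_subset_insert (D : Finset (Finset O)) (t : Finset O) :
    weakMajority D ∩ t ⊆ weakMajority (insert t D) := by
  by_cases ht : t ∈ D
  · rw [insert_eq_of_mem ht]
    exact inter_subset_left
  intro x hx
  rw [mem_inter, mem_weakMajority] at hx
  rw [mem_weakMajority, card_insert_of_notMem ht, filter_insert, if_pos hx.2,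
    card_insert_of_notMem fun h => ht (mem_filter.1 h).1]
  omega

lemma weakMajority_insert_sdiff_subset (D : Finset (Finset O)) (t : Finset O) :
    weakMajority (insert t D) \ t ⊆ weakMajority D := by
  by_cases ht : t ∈ D
  · rw [insert_eq_of_mem ht]
    exact sdiff_subset
  intro x hx
  rw [mem_sdiff, mem_weakMajority, card_insert_of_notMem ht, filter_insert, if_neg hx.2] at hx
  rw [mem_weakMajority]
  omega

end WeakMajority

section DistinctTops

variable {O : Type*} [Fintype O] [DecidableEq O]

lemma fGe_eq_weakMajority {N : Finset ℕ} (P : Profile (Finset O) N) :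
    fGe O N P = weakMajority (distinctTops P) := rfl

lemma mem_distinctTops {N : Finset ℕ} {P : Profile (Finset O) N} {T : Finset O} :
    T ∈ distinctTops P ↔ ∃ i, ∃ hi : i ∈ N, (P i hi).top = T := by
  simp [distinctTops]

lemma distinctTops_congr {N : Finset ℕ} {P P' : Profile (Finset O) N}
    (h : ∀ i (hi : i ∈ N), (P i hi).top = (P' i hi).top) : distinctTops P = distinctTops P' :=
  image_congr fun i _ => h i.1 i.2

lemma distinctTops_const {N : Finset ℕ} (hN : N.Nonempty) (p : Pref (Finset O)) :
    distinctTops (fun _ _ => p : Profile (Finset O) N) = {p.top} := by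
  simp [distinctTops, image_const hN.attach]

lemma distinctTops_eq_insert_erase {N : Finset ℕ} (P : Profile (Finset O) N) {i : ℕ}
    (hi : i ∈ N) :
    distinctTops P = insert (P i hi).top
      (distinctTops fun j (hj : j ∈ N.erase i) => P j (mem_of_mem_erase hj)) := by
  ext T
  simp only [mem_insert, mem_distinctTops, mem_erase]
  constructor
  · rintro ⟨j, hj, rfl⟩
    by_cases hji : j = i
    · subst hji
      exact Or.inl rfl
    · exact Or.inr ⟨j, ⟨hji, hj⟩, rfl⟩
  · rintro (rfl | ⟨j, ⟨_, hj⟩, rfl⟩)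
    exacts [⟨i, hi, rfl⟩, ⟨j, hj, rfl⟩]

lemma distinctTops_union_of_clones {N N' : Finset ℕ} (P : Profile (Finset O) (N ∪ N'))
    {i : ℕ} (hi : i ∈ N)
    (hclone : ∀ j (hj : j ∈ N'), P j (mem_union_right N hj) = P i (mem_union_left N' hi)) :
    distinctTops P = distinctTops fun j hj => P j (mem_union_left N' hj) := by
  ext T
  simp only [mem_distinctTops]
  constructor
  · rintro ⟨j, hj, rfl⟩
    rcases mem_union.1 hj with hjN | hjN'
    · exact ⟨j, hjN, rfl⟩
    · exact ⟨i, hi, by rw [hclone j hjN']⟩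
  · rintro ⟨j, hj, rfl⟩
    exact ⟨j, mem_union_left N' hj, rfl⟩

lemma distinctTops_relabel {N : Finset ℕ} (P : Profile (Finset O) N) (μ : Equiv.Perm O) :
    distinctTops (fun i hi => (P i hi).relabel μ.finsetCongr) =
      (distinctTops P).image (·.image μ) := by
  rw [distinctTops, distinctTops, image_image]
  refine image_congr fun i _ => ?_
  simp [Pref.relabel_top_s7, Equiv.finsetCongr_apply, map_eq_image]

end DistinctTops

section Axioms

variable {O : Type*} [Fintype O] [DecidableEq O]

theorem fGe_ontoOn : OntoOn (SepDom O) (fGe O) := fun N hN a =>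
  ⟨fun _ _ => separablePref a, fun _ _ => separablePref_separable a, by
    rw [fGe_eq_weakMajority, distinctTops_const hN, separablePref_top, weakMajority_singleton]⟩

theorem fGe_topsOnlyOn (D : Set (Pref (Finset O))) : TopsOnlyOn D (fGe O) :=
  fun _ _ _ _ _ _ h => congrArg weakMajority (distinctTops_congr h)

theorem fGe_falseNameProofOn (D : Set (Pref (Finset O))) : FalseNameProofOn D (fGe O) := by
  intro N N' _ _ _ P _ i hi hclone
  rw [Pref.wpref, fGe_eq_weakMajority, distinctTops_union_of_clones P hi hclone]
  exact (P i _).le_refl _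

theorem fGe_participationOn : ParticipationOn (SepDom O) (fGe O) := by
  intro N _ P hP i hi
  rw [Pref.wpref, fGe_eq_weakMajority, fGe_eq_weakMajority, distinctTops_eq_insert_erase P hi]
  exact (hP i hi).le_of_subset_of_subset (weakMajority_inter_subset_insert _ _)
    (weakMajority_insert_sdiff_subset _ _)

theorem fGe_objectNeutralOn (D : Set (Pref (Finset O))) : ObjectNeutralOn D (fGe O) := by
  intro μ N _ P _
  rw [fGe_eq_weakMajority, fGe_eq_weakMajority, distinctTops_relabel,
    weakMajority_image_equiv]

end Axioms

theorem stmt_7_general {O : Type*} [Fintype O] [DecidableEq O] :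
    OntoOn (SepDom O) (fGe O) ∧ TopsOnlyOn (SepDom O) (fGe O) ∧
    FalseNameProofOn (SepDom O) (fGe O) ∧ ParticipationOn (SepDom O) (fGe O) ∧
    ObjectNeutralOn (SepDom O) (fGe O) :=
  ⟨fGe_ontoOn, fGe_topsOnlyOn _, fGe_falseNameProofOn _, fGe_participationOn,
    fGe_objectNeutralOn _⟩

/-- On the domain of separable preferences, the rule `f^≥` (an object is
chosen iff it belongs to at least half of the distinct top sets of the profile) satisfies
ontoness, tops-onliness, false-name-proofness, participation and object neutrality. -/
theorem stmt_7 {O : Type*} [Fintype O] [DecidableEq O] (hO : 2 ≤ Fintype.card O) :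
    OntoOn (SepDom O) (fGe O) ∧ TopsOnlyOn (SepDom O) (fGe O) ∧
    FalseNameProofOn (SepDom O) (fGe O) ∧ ParticipationOn (SepDom O) (fGe O) ∧
    ObjectNeutralOn (SepDom O) (fGe O) :=
  stmt_7_general
end

section
/- Let P̄_0 be a non-separable preference over 2^𝒪 with t(P̄_0) ≠ 𝒪. Then the tops-only extension of the rule f^≥ to the domain 𝒮 ∪ {P̄_0} violates participation: there exist a society N with |N| ≥ 2, a voter i ∈ N, and a profile P_N ∈ (𝒮 ∪ {P̄_0})^N such that f(P_{N\{i}}) P_i f(P_N). -/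
/-!
Non-separability of `P0` yields an object `x` and a set `A ∌ x` that `P0` ranks against its
own top: either `x ∈ t(P0)` but `A` beats `A ∪ {x}`, or `x ∉ t(P0)` but `A ∪ {x}` beats `A`.
Since the extension is tops-only, outcomes can be computed on separable profiles, where `f^≥`
only sees the set of distinct tops. In the second case two separable voters with tops
`A ∪ {x}` and `A` get `A ∪ {x}`; when `P0` joins there are three distinct tops and the outcome
drops to `A`. In the first case a third separable voter with a top `C` avoiding `x` and
`t(P0) \ A` makes `f^≥` pick `A`, while with `P0` there are four distinct tops and the outcome
is `A ∪ {x}`.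
-/

open Finset

namespace Pref

variable {A : Type*}

lemma pref_of_not_pref (p : Pref A) {a b : A} (hne : a ≠ b) (h : ¬ p.pref a b) : p.pref b a :=
  (@lt_or_gt_of_ne _ p _ _ hne).resolve_right h

variable [Fintype A] [Nonempty A]

lemma not_pref_top_s9 (p : Pref A) (S : A) : ¬ p.pref S p.top :=
  @not_lt_of_ge _ p.toPreorder _ _ (@le_max' _ p _ _ (mem_univ S))

lemma top_eq_of_forall_pref (p : Pref A) (T : A) (h : ∀ S, S ≠ T → p.pref T S) : p.top = T :=
  by_contra fun hne => p.not_pref_top_s9 T (h _ hne)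

end Pref

section Agreement

variable {O : Type*} [DecidableEq O]

def agreement (T S : Finset O) : ℤ := ∑ o ∈ S, if o ∈ T then 1 else -1

lemma agreement_insert (T S : Finset O) {x : O} (hx : x ∉ S) :
    agreement T (insert x S) = (if x ∈ T then 1 else -1) + agreement T S :=
  sum_insert hx

lemma agreement_eq (T S : Finset O) :
    agreement T S = #{o ∈ S | o ∈ T} - #{o ∈ S | o ∉ T} := by
  simp [agreement, sum_ite, sub_eq_add_neg]

lemma agreement_self (T : Finset O) : agreement T T = #T := by
  rw [agreement, sum_ite_of_true fun _ h => h]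
  simp

lemma agreement_lt_self {T S : Finset O} (h : S ≠ T) : agreement T S < agreement T T := by
  have hsub : {o ∈ S | o ∈ T} ⊆ T := fun o ho => (mem_filter.1 ho).2
  rw [agreement_eq, agreement_self]
  rcases (card_le_card hsub).lt_or_eq with hlt | heq
  · omega
  · have hTS : T ⊆ S := (eq_of_subset_of_card_le hsub heq.ge) ▸ filter_subset _ _
    obtain ⟨z, hzS, hzT⟩ := not_subset.1 fun hST => h (hST.antisymm hTS)
    have : 0 < #{o ∈ S | o ∉ T} := card_pos.2 ⟨z, mem_filter.2 ⟨hzS, hzT⟩⟩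
    omega

end Agreement

section SeparablePreference

variable {O : Type*} [Fintype O] [DecidableEq O]

noncomputable def sepPrefOfTop (T : Finset O) : Pref (Finset O) :=
  LinearOrder.lift' (fun S => toLex (agreement T S, Fintype.equivFin (Finset O) S))
    fun _ _ h => (Fintype.equivFin (Finset O)).injective (congrArg (fun z => (ofLex z).2) h)

lemma sepPrefOfTop_pref_iff (T S S' : Finset O) :
    (sepPrefOfTop T).pref S S' ↔ agreement T S' < agreement T S ∨
      (agreement T S' = agreement T S ∧
        Fintype.equivFin (Finset O) S' < Fintype.equivFin (Finset O) S) :=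
  Prod.Lex.lt_iff

lemma separable_sepPrefOfTop (T : Finset O) : Separable (sepPrefOfTop T) := by
  intro S x hx
  rw [sepPrefOfTop_pref_iff, sepPrefOfTop_pref_iff, ← insert_empty,
    agreement_insert T S hx, agreement_insert T ∅ (notMem_empty x)]
  by_cases hxT : x ∈ T <;> simp [hxT]

lemma top_sepPrefOfTop (T : Finset O) : (sepPrefOfTop T).top = T :=
  (sepPrefOfTop T).top_eq_of_forall_pref T fun S hS =>
    (sepPrefOfTop_pref_iff T T S).2 (Or.inl (agreement_lt_self hS))

end SeparablePreference

section HalfMajority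

variable {O : Type*} [Fintype O] [DecidableEq O]

def halfMajority (ts : Finset (Finset O)) : Finset O := {x | #ts ≤ 2 * #{T ∈ ts | x ∈ T}}

lemma fGe_eq_halfMajority {N : Finset ℕ} (P : Profile (Finset O) N) :
    fGe O N P = halfMajority (distinctTops P) :=
  rfl

lemma mem_halfMajority_toFinset {ts : List (Finset O)} (hts : ts.Nodup) (y : O) :
    y ∈ halfMajority ts.toFinset ↔ ts.length ≤ 2 * ts.countP (y ∈ ·) := by
  rw [halfMajority, mem_filter, List.toFinset_card_of_nodup hts, List.filter_toFinset,
    List.toFinset_card_of_nodup (hts.filter _), ← List.countP_eq_length_filter]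
  simp

variable {T C A : Finset O} {x : O}

lemma halfMajority_pair (hxA : x ∉ A) : halfMajority [insert x A, A].toFinset = insert x A := by
  have hne : insert x A ≠ A := (ne_insert_of_notMem _ _ hxA).symm
  ext y
  rw [mem_halfMajority_toFinset (by simp [hne])]
  by_cases hyA : y ∈ A
  · simp [hyA]
  · by_cases hyx : y = x <;> simp [hyA, hyx]

lemma halfMajority_triple (hxA : x ∉ A) (hxC : x ∉ C) (hCxA : C ≠ insert x A) (hCA : C ≠ A) :
    halfMajority [C, insert x A, A].toFinset = A := by
  have hne : insert x A ≠ A := (ne_insert_of_notMem _ _ hxA).symm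
  ext y
  rw [mem_halfMajority_toFinset (by simp [hne, hCxA, hCA])]
  by_cases hyA : y ∈ A
  · by_cases hyC : y ∈ C <;> simp [hyA, hyC]
  · by_cases hyx : y = x
    · subst hyx; simp [hxA, hxC]
    · by_cases hyC : y ∈ C <;> simp [hyA, hyx, hyC]

lemma halfMajority_quad (hxA : x ∉ A) (hxT : x ∈ T) (hxC : x ∉ C) (hCT : C ∩ T ⊆ A)
    (hTC : T ≠ C) (hTxA : T ≠ insert x A) (hTA : T ≠ A) (hCxA : C ≠ insert x A) (hCA : C ≠ A) :
    halfMajority [T, C, insert x A, A].toFinset = insert x A := by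
  have hne : insert x A ≠ A := (ne_insert_of_notMem _ _ hxA).symm
  ext y
  rw [mem_halfMajority_toFinset (by simp [hne, hCxA, hCA, hTC, hTxA, hTA])]
  by_cases hyA : y ∈ A
  · by_cases hyC : y ∈ C <;> by_cases hyT : y ∈ T <;> simp [hyA, hyC, hyT]
  · by_cases hyx : y = x
    · subst hyx; simp [hxA, hxC, hxT]
    · by_cases hyT : y ∈ T
      · have hyC : y ∉ C := fun hyC => hyA (hCT (mem_inter.2 ⟨hyC, hyT⟩))
        simp [hyA, hyx, hyC, hyT]
      · by_cases hyC : y ∈ C <;> simp [hyA, hyx, hyC, hyT]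

end HalfMajority

section Profiles

variable {O : Type*} [Fintype O] [DecidableEq O]

noncomputable def consSepProfile (p : Pref (Finset O)) (ts : List (Finset O)) :
    Profile (Finset O) (range (ts.length + 1))
  | 0, _ => p
  | j + 1, _ => sepPrefOfTop (ts.getD j ∅)

lemma consSepProfile_inDomain (p : Pref (Finset O)) (ts : List (Finset O)) :
    (consSepProfile p ts).inDomain (SepDom O ∪ {p}) := by
  rintro (_ | j) _
  · exact Or.inr rfl
  · exact Or.inl (separable_sepPrefOfTop _)

lemma exists_succ_top_consSepProfile_iff (p : Pref (Finset O)) (ts : List (Finset O))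
    (T : Finset O) :
    (∃ j, ∃ hj : j + 1 ∈ range (ts.length + 1), (consSepProfile p ts (j + 1) hj).top = T) ↔
      T ∈ ts := by
  simp only [consSepProfile, top_sepPrefOfTop, mem_range, Nat.succ_lt_succ_iff,
    List.mem_iff_getElem]
  constructor
  · rintro ⟨j, hj, rfl⟩
    exact ⟨j, hj, (List.getD_eq_getElem _ _ hj).symm⟩
  · rintro ⟨j, hj, rfl⟩
    exact ⟨j, hj, List.getD_eq_getElem _ _ hj⟩

lemma distinctTops_consSepProfile (p : Pref (Finset O)) (ts : List (Finset O)) :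
    distinctTops (consSepProfile p ts) = (p.top :: ts).toFinset := by
  ext T
  simp only [distinctTops, mem_image, mem_attach, true_and, Subtype.exists,
    List.toFinset_cons, mem_insert, List.mem_toFinset,
    ← exists_succ_top_consSepProfile_iff p ts T]
  constructor
  · rintro ⟨_ | j, hj, rfl⟩
    · exact Or.inl rfl
    · exact Or.inr ⟨j, hj, rfl⟩
  · rintro (rfl | ⟨j, hj, rfl⟩)
    · exact ⟨0, by simp, rfl⟩
    · exact ⟨j + 1, hj, rfl⟩

lemma distinctTops_consSepProfile_erase_zero (p : Pref (Finset O)) (ts : List (Finset O)) :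
    distinctTops (N := (range (ts.length + 1)).erase 0)
      (fun j hj => consSepProfile p ts j (mem_of_mem_erase hj)) = ts.toFinset := by
  ext T
  simp only [distinctTops, mem_image, mem_attach, true_and, Subtype.exists,
    List.mem_toFinset, ← exists_succ_top_consSepProfile_iff p ts T]
  constructor
  · rintro ⟨_ | j, hj, rfl⟩
    · exact absurd rfl (ne_of_mem_erase hj)
    · exact ⟨j, mem_of_mem_erase hj, rfl⟩
  · rintro ⟨j, hj, rfl⟩
    exact ⟨j + 1, mem_erase.2 ⟨j.succ_ne_zero, hj⟩, rfl⟩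

end Profiles

section Participation

variable {O : Type*} [Fintype O] [DecidableEq O]

lemma IsTopsOnlyExtensionOn.eq_halfMajority {D : Set (Pref (Finset O))} {g : Rule (Finset O)}
    (hg : IsTopsOnlyExtensionOn D (fGe O) g) {N : Finset ℕ} (hN : N.Nonempty)
    {P : Profile (Finset O) N} (hP : P.inDomain D) :
    g N P = halfMajority (distinctTops P) := by
  rw [hg N hN P hP (fun i hi => sepPrefOfTop (P i hi).top)
    (fun _ _ => separable_sepPrefOfTop _) (fun _ _ => (top_sepPrefOfTop _).symm)]
  simp only [fGe_eq_halfMajority, distinctTops, top_sepPrefOfTop]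

lemma exists_participation_violation {p : Pref (Finset O)} {g : Rule (Finset O)}
    (hg : IsTopsOnlyExtensionOn (SepDom O ∪ {p}) (fGe O) g) {ts : List (Finset O)}
    (hts : ts ≠ [])
    (hpref : p.pref (halfMajority ts.toFinset) (halfMajority (p.top :: ts).toFinset)) :
    ∃ (N : Finset ℕ) (_ : 2 ≤ N.card) (i : ℕ) (hi : i ∈ N) (P : Profile (Finset O) N),
      P.inDomain (SepDom O ∪ {p}) ∧
      (P i hi).pref (g (N.erase i) (fun j hj => P j (mem_of_mem_erase hj))) (g N P) := by
  have hlen : 0 < ts.length := List.length_pos_iff.2 hts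
  have h0 : 0 ∈ range (ts.length + 1) := by simp
  refine ⟨_, by simp; omega, 0, h0, consSepProfile p ts, consSepProfile_inDomain p ts, ?_⟩
  rw [hg.eq_halfMajority ⟨0, h0⟩ (consSepProfile_inDomain p ts), distinctTops_consSepProfile,
    hg.eq_halfMajority ⟨1, by simpa using hlen⟩ fun j _ => consSepProfile_inDomain p ts j _,
    distinctTops_consSepProfile_erase_zero]
  exact hpref

end Participation

section NonSeparable

variable {O : Type*} [Fintype O] [DecidableEq O]

lemma exists_reversal_of_not_separable {p : Pref (Finset O)} (h : ¬ Separable p) :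
    ∃ x A, x ∉ A ∧ ((x ∈ p.top ∧ p.pref A (insert x A)) ∨
      (x ∉ p.top ∧ p.pref (insert x A) A)) := by
  obtain ⟨S, x, hxS, hne⟩ : ∃ S x, x ∉ S ∧ ¬ (p.pref (insert x S) S ↔ p.pref {x} ∅) := by
    simpa [Separable] using h
  have reverse : ∀ B, x ∉ B → ¬ p.pref (insert x B) B → p.pref B (insert x B) :=
    fun B hxB => p.pref_of_not_pref (ne_insert_of_notMem _ _ hxB).symm
  refine ⟨x, ?_⟩
  by_cases hxT : x ∈ p.top <;> by_cases hS : p.pref (insert x S) S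
  · exact ⟨∅, notMem_empty x, .inl ⟨hxT, reverse ∅ (notMem_empty x) (hne <| iff_of_true hS ·)⟩⟩
  · exact ⟨S, hxS, .inl ⟨hxT, reverse S hxS hS⟩⟩
  · exact ⟨S, hxS, .inr ⟨hxT, hS⟩⟩
  · exact ⟨∅, notMem_empty x, .inr ⟨hxT, not_not.1 (hne <| iff_of_false hS ·)⟩⟩

lemma exists_third_top {T A : Finset O} {x : O} (hT : T ≠ univ) (hxT : x ∈ T) (hxA : x ∉ A) :
    ∃ C, x ∉ C ∧ C ∩ T ⊆ A ∧ T ≠ C ∧ C ≠ insert x A ∧ C ≠ A := by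
  obtain ⟨z, hzT⟩ : ∃ z, z ∉ T := by simpa [eq_univ_iff_forall] using hT
  have hzx : z ≠ x := fun h => hzT (h ▸ hxT)
  by_cases hA : A = ∅
  · subst hA
    refine ⟨{z}, by simpa using hzx.symm, by simp [hzT], ?_, by simpa using hzx, by simp⟩
    rintro rfl
    exact hzT (mem_singleton_self z)
  · exact ⟨∅, notMem_empty x, by simp, ne_empty_of_mem hxT, (insert_ne_empty x A).symm, Ne.symm hA⟩

end NonSeparable

theorem stmt_9_general {O : Type*} [Fintype O] [DecidableEq O]
    (P0 : Pref (Finset O)) (hns : ¬ Separable P0) (htop : P0.top ≠ (Finset.univ : Finset O)) :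
    ∀ g : Rule (Finset O), IsTopsOnlyExtensionOn (SepDom O ∪ {P0}) (fGe O) g →
      ∃ (N : Finset ℕ) (_ : 2 ≤ N.card) (i : ℕ) (hi : i ∈ N) (P : Profile (Finset O) N),
        P.inDomain (SepDom O ∪ {P0}) ∧
        (P i hi).pref (g (N.erase i) (fun j hj => P j (Finset.mem_of_mem_erase hj)))
          (g N P) := by
  intro g hg
  obtain ⟨x, A, hxA, ⟨hxT, hpref⟩ | ⟨hxT, hpref⟩⟩ := exists_reversal_of_not_separable hns
  · obtain ⟨C, hxC, hCT, hTC, hCxA, hCA⟩ := exists_third_top htop hxT hxA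
    have hTxA : P0.top ≠ insert x A := fun h => P0.not_pref_top_s9 A (h ▸ hpref)
    have hTA : P0.top ≠ A := fun h => hxA (h ▸ hxT)
    refine exists_participation_violation hg (ts := [C, insert x A, A]) (by simp) ?_
    rwa [halfMajority_triple hxA hxC hCxA hCA,
      halfMajority_quad hxA hxT hxC hCT hTC hTxA hTA hCxA hCA]
  · have hTxA : P0.top ≠ insert x A := fun h => hxT (h ▸ mem_insert_self x A)
    have hTA : P0.top ≠ A := fun h => P0.not_pref_top_s9 (insert x A) (h ▸ hpref)
    refine exists_participation_violation hg (ts := [insert x A, A]) (by simp) ?_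
    rwa [halfMajority_pair hxA, halfMajority_triple hxA hxT hTxA hTA]

/-- If `P0` is a non-separable preference whose top set is not the whole
set of objects, then every tops-only extension of `f^≥` to the domain `𝒮 ∪ {P0}` violates
participation: some voter of some society strictly prefers the outcome obtained by
abstaining. -/
theorem stmt_9 {O : Type*} [Fintype O] [DecidableEq O] (hO : 2 ≤ Fintype.card O)
    (P0 : Pref (Finset O)) (hns : ¬ Separable P0) (htop : P0.top ≠ (Finset.univ : Finset O)) :
    ∀ g : Rule (Finset O), IsTopsOnlyExtensionOn (SepDom O ∪ {P0}) (fGe O) g →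
      ∃ (N : Finset ℕ) (_ : 2 ≤ N.card) (i : ℕ) (hi : i ∈ N) (P : Profile (Finset O) N),
        P.inDomain (SepDom O ∪ {P0}) ∧
        (P i hi).pref (g (N.erase i) (fun j hj => P j (Finset.mem_of_mem_erase hj)))
          (g N P) :=
  stmt_9_general P0 hns htop
end
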